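/- With γ, ρ, ψ, φ_θ, D_γ as above, let Dφ_θ(ξ)^{-2} = (Dφ_θ(ξ)^{-1})^T Dφ_θ(ξ)^{-1}. Then for all θ ∈ D_γ, ξ ∈ ℝⁿ \ {0}, and ξ* ∈ ℝⁿ: (i) if ±Im θ ≥ 0 then 0 ≤ ∓arg((Dφ_θ(ξ)^{-2} ξ*)·ξ*) < π/4; and (ii) there is a constant C > 0 (depending only on γ and sup ρ') such that |(Dφ_θ(ξ)^{-2} ξ*)·ξ*| ≥ C |ξ*|². -/

import Mathlib

open MeasureTheory Complex Real Filter Metric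
open scoped Classical

noncomputable section

abbrev Rn (n : ℕ) := EuclideanSpace ℝ (Fin n)
abbrev L2 (n : ℕ) := MeasureTheory.Lp ℂ 2 (volume : Measure (Rn n))
abbrev Op (n : ℕ) := L2 n →L[ℂ] L2 n

/-- The Laplacian of a Schwartz test function. -/
def schwartzLap {n : ℕ} (φ : SchwartzMap (Rn n) ℂ) (x : Rn n) : ℂ :=
  ∑ i : Fin n, iteratedFDeriv ℝ 2 (⇑φ) x ![EuclideanSpace.single i 1, EuclideanSpace.single i 1]

/-- `(-Δ + W - z) u = f` in the sense of distributions, for `u, f ∈ L²`. -/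
def IsWeakSolution {n : ℕ} (W : Rn n → ℂ) (z : ℂ) (u f : L2 n) : Prop :=
  ∀ φ : SchwartzMap (Rn n) ℂ,
    ∫ x, u x * (-(schwartzLap φ x) + (W x - z) * φ x) = ∫ x, f x * φ x

/-- `T` is the (bounded, everywhere defined) resolvent `(-Δ + W - z)⁻¹` on `L²`. -/
def IsResolvent {n : ℕ} (W : Rn n → ℂ) (z : ℂ) (T : Op n) : Prop :=
  (∀ f, IsWeakSolution W z (T f) f) ∧ ∀ u f, IsWeakSolution W z u f → u = T f

/-- `T` is the operator of multiplication by the (bounded) function `g`. -/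
def IsMulOp {n : ℕ} (g : Rn n → ℂ) (T : Op n) : Prop :=
  ∀ u : L2 n, (⇑(T u) : Rn n → ℂ) =ᵐ[volume] fun x => g x * u x

/-- The sector `-π/8 < arg λ < 7π/8`. -/
def Sector : Set ℂ := {z : ℂ | -(π/8) < z.arg ∧ z.arg < 7*π/8}

/-- The rectangle `Ω = (a', a) + i(-γ', b)`. -/
def Rect (a' a γ' b : ℝ) : Set ℂ := {z : ℂ | z.re ∈ Set.Ioo a' a ∧ z.im ∈ Set.Ioo (-γ') b}

/-- `ψ(ξ) = ρ(|ξ|) ξ / |ξ|`. -/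
def psiR {n : ℕ} (ρ : ℝ → ℝ) (ξ : Rn n) : Rn n :=
  if ξ = 0 then 0 else (ρ ‖ξ‖ / ‖ξ‖) • ξ

/-- The deformation `φ_θ(ξ) = ξ + θ ψ(ξ)`, with values in `ℂⁿ`. -/
def phiTheta {n : ℕ} (ρ : ℝ → ℝ) (θ : ℂ) (ξ : Rn n) : Fin n → ℂ :=
  fun j => (ξ j : ℂ) + θ * (psiR ρ ξ j : ℂ)

/-- The bilinear (non-Hermitian) dot product on `ℂⁿ`. -/
def dotC {n : ℕ} (v w : Fin n → ℂ) : ℂ := ∑ j, v j * w j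

/-- The Jacobian matrix `Dψ(ξ) = (ρ(|ξ|)/|ξ|) I + (ρ'(|ξ|)/|ξ|² - ρ(|ξ|)/|ξ|³) ξξᵀ`. -/
def DpsiMat {n : ℕ} (ρ : ℝ → ℝ) (ξ : Rn n) : Matrix (Fin n) (Fin n) ℝ :=
  if ξ = 0 then 0 else
    (ρ ‖ξ‖ / ‖ξ‖) • (1 : Matrix (Fin n) (Fin n) ℝ)
      + (deriv ρ ‖ξ‖ / ‖ξ‖ ^ 2 - ρ ‖ξ‖ / ‖ξ‖ ^ 3) • Matrix.of fun i j => ξ i * ξ j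

/-- The Jacobian matrix `Dφ_θ(ξ) = I + θ Dψ(ξ)` (a complex symmetric matrix). -/
def DphiMat {n : ℕ} (ρ : ℝ → ℝ) (θ : ℂ) (ξ : Rn n) : Matrix (Fin n) (Fin n) ℂ :=
  1 + θ • (DpsiMat ρ ξ).map Complex.ofReal

/-- The quadratic form `(Dφ_θ(ξ)⁻² ξ*)·ξ*` with `Dφ_θ⁻² = (Dφ_θ⁻¹)ᵀ Dφ_θ⁻¹`. -/
def qForm {n : ℕ} (ρ : ℝ → ℝ) (θ : ℂ) (ξ ξs : Rn n) : ℂ :=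
  dotC ((((DphiMat ρ θ ξ)⁻¹).transpose * (DphiMat ρ θ ξ)⁻¹).mulVec fun j => (ξs j : ℂ))
    (fun j => (ξs j : ℂ))

/-- The region `D_γ = {θ ∈ ℂ : |Re θ| + |Im θ| < γ}`. -/
def Dgamma (γ : ℝ) : Set ℂ := {θ : ℂ | |θ.re| + |θ.im| < γ}

/-!
For `ξ ≠ 0` let `P` be the projection onto `ℝ ξ`, `α = 1 + θ ρ(|ξ|)/|ξ|` and `μ = 1 + θ ρ'(|ξ|)`.
Then `Dφ_θ(ξ) = α (1 - P) + μ P`, so `(Dφ_θ⁻² ξ*)·ξ* = s α⁻² + t μ⁻²` with `t = (ξ·ξ*)²/|ξ|²`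
and `s = |ξ*|² - t`, both nonnegative by Cauchy–Schwarz. By the mean value theorem `ρ(r)/r` and
`ρ'(r)` lie in `[0, tan(π/8)/γ)`, so for `θ ∈ D_γ` the numbers `α, μ` satisfy `|arg| < π/8` and have
real part in `(1/2, 3/2)`. Hence `α⁻², μ⁻²` lie in the sector `|arg| < π/4` on the side of the real
axis opposite to `θ`, with real part at least `1/16`. That sector is a convex cone, which gives both
claims with `C = 1/16`.
-/

open Matrix

lemma tan_pi_div_eight_sq_add_two_mul : Real.tan (π / 8) ^ 2 + 2 * Real.tan (π / 8) = 1 := by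
  have h := Real.tan_two_mul (x := π / 8)
  rw [show 2 * (π / 8) = π / 4 by ring, Real.tan_pi_div_four] at h
  have hne : 1 - Real.tan (π / 8) ^ 2 ≠ 0 := by
    intro h0
    rw [h0, div_zero] at h
    exact one_ne_zero h
  field_simp at h
  linarith

lemma tan_pi_div_eight_pos : 0 < Real.tan (π / 8) :=
  Real.tan_pos_of_pos_of_lt_pi_div_two (by positivity) (by linarith [Real.pi_pos])

lemma tan_pi_div_eight_lt_half : Real.tan (π / 8) < 1 / 2 := by
  nlinarith [tan_pi_div_eight_sq_add_two_mul, tan_pi_div_eight_pos]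

lemma div_self_mem_of_deriv_mem {f : ℝ → ℝ} (hf : Differentiable ℝ f) (hf0 : f 0 = 0)
    {s : Set ℝ} (hs : ∀ t ≥ 0, deriv f t ∈ s) {r : ℝ} (hr : 0 < r) : f r / r ∈ s := by
  obtain ⟨c, hc, hslope⟩ :=
    exists_deriv_eq_slope f hr hf.continuous.continuousOn hf.differentiableOn
  rw [hf0, sub_zero, sub_zero] at hslope
  exact hslope ▸ hs c hc.1.le

lemma abs_arg_lt_pi_div_four {q : ℂ} (h : |q.im| < q.re) : |q.arg| < π / 4 := by
  have hre : 0 < q.re := (abs_nonneg _).trans_lt h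
  have harg := abs_lt.1 (Complex.abs_arg_lt_pi_div_two_iff.2 (Or.inl hre))
  have harctan : q.arg = Real.arctan (q.im / q.re) := by
    rw [← Complex.tan_arg, Real.arctan_tan harg.1 harg.2]
  have hx : |q.im / q.re| < 1 := by rwa [abs_div, abs_of_pos hre, div_lt_one hre]
  obtain ⟨hx₁, hx₂⟩ := abs_lt.1 hx
  rw [harctan, abs_lt, ← Real.arctan_one, ← Real.arctan_neg]
  exact ⟨Real.arctan_strictMono hx₁, Real.arctan_strictMono hx₂⟩

/-- The pointed sector `|arg z| < π/4` on the side of the real axis opposite to `θ`. -/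
def quarterSector (θ : ℂ) : Set ℂ :=
  {z | (z = 0 ∨ |z.im| < z.re) ∧ ∃ k : ℝ, 0 ≤ k ∧ z.im = -(k * θ.im)}

namespace quarterSector

variable {θ z w : ℂ}

lemma add_mem (hz : z ∈ quarterSector θ) (hw : w ∈ quarterSector θ) :
    z + w ∈ quarterSector θ := by
  obtain ⟨hz, k, hk, hzk⟩ := hz
  obtain ⟨hw, l, hl, hwl⟩ := hw
  refine ⟨?_, k + l, add_nonneg hk hl, by simp [hzk, hwl]; ring⟩
  rcases hz with rfl | hz
  · simpa using hw
  rcases hw with rfl | hw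
  · simpa using Or.inr hz
  exact Or.inr <| by simpa using (abs_add_le _ _).trans_lt (add_lt_add hz hw)

lemma ofReal_mul_mem {s : ℝ} (hs : 0 ≤ s) (hz : z ∈ quarterSector θ) :
    (s : ℂ) * z ∈ quarterSector θ := by
  obtain ⟨hz, k, hk, hzk⟩ := hz
  refine ⟨?_, s * k, mul_nonneg hs hk, by simp [hzk]; ring⟩
  rcases hs.eq_or_lt with rfl | hs
  · simp
  rcases hz with rfl | hz
  · simp
  exact Or.inr <| by simpa [abs_mul, abs_of_pos hs] using mul_lt_mul_of_pos_left hz hs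

lemma arg_bounds (hz : z ∈ quarterSector θ) :
    (0 ≤ θ.im → 0 ≤ -z.arg ∧ -z.arg < π / 4) ∧ (θ.im ≤ 0 → 0 ≤ z.arg ∧ z.arg < π / 4) := by
  obtain ⟨hz | hz, k, hk, hzk⟩ := hz
  · simp [hz, Real.pi_pos]
  have harg := abs_lt.1 (abs_arg_lt_pi_div_four hz)
  refine ⟨fun hθ => ⟨?_, by linarith⟩, fun hθ => ⟨?_, harg.2⟩⟩
  · have him : z.im ≤ 0 := by rw [hzk]; nlinarith
    rcases him.lt_or_eq with him | him
    · linarith [Complex.arg_neg_iff.2 him]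
    · rw [Complex.arg_eq_zero_iff.2 ⟨(abs_nonneg _).trans hz.le, him⟩, neg_zero]
  · exact Complex.arg_nonneg_iff.2 (by rw [hzk]; nlinarith)

end quarterSector

lemma inv_sq_one_add_mul_ofReal_re_ge_and_mem_quarterSector {θ : ℂ} {c : ℝ} (hc : 0 ≤ c)
    (h : c * (|θ.re| + |θ.im|) < Real.tan (π / 8)) :
    1 / 16 ≤ (((1 + θ * c) ^ 2)⁻¹).re ∧ ((1 + θ * c) ^ 2)⁻¹ ∈ quarterSector θ := by
  have hτ₀ := tan_pi_div_eight_pos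
  have hτ₁ := tan_pi_div_eight_lt_half
  have hτ := tan_pi_div_eight_sq_add_two_mul
  set τ := Real.tan (π / 8)
  set R := 1 + θ.re * c with hR
  set I := θ.im * c with hI
  have hre : ((1 + θ * c) ^ 2).re = R ^ 2 - I ^ 2 := by simp [sq, hR, hI]
  have him : ((1 + θ * c) ^ 2).im = 2 * R * I := by simp [sq, hR, hI]; ring
  have hnormSq : Complex.normSq ((1 + θ * c) ^ 2) = (R ^ 2 + I ^ 2) ^ 2 := by
    rw [Complex.normSq_apply, hre, him]; ring
  have hzre : (((1 + θ * c) ^ 2)⁻¹).re = (R ^ 2 - I ^ 2) / (R ^ 2 + I ^ 2) ^ 2 := by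
    rw [Complex.inv_re, hre, hnormSq]
  have hzim : (((1 + θ * c) ^ 2)⁻¹).im = -(2 * R * I) / (R ^ 2 + I ^ 2) ^ 2 := by
    rw [Complex.inv_im, him, hnormSq]
  have hθre : |θ.re * c| = c * |θ.re| := by rw [abs_mul, abs_of_nonneg hc, mul_comm]
  have hθim : |I| = c * |θ.im| := by rw [hI, abs_mul, abs_of_nonneg hc, mul_comm]
  rw [mul_add] at h
  have hcθ : 0 ≤ c * |θ.im| := mul_nonneg hc (abs_nonneg _)
  have hR₀ : 1 / 2 < R := by linarith [neg_abs_le (θ.re * c)]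
  have hR₁ : R < 3 / 2 := by linarith [le_abs_self (θ.re * c)]
  -- `|I| < τ R` says `|arg (1 + θ c)| < π/8`
  have hIR : |I| < τ * R := by nlinarith [le_abs_self (θ.re * c), neg_abs_le (θ.re * c)]
  have hI₂ : I ^ 2 < τ ^ 2 * R ^ 2 := by nlinarith [abs_nonneg I, sq_abs I]
  have hN : 0 < (R ^ 2 + I ^ 2) ^ 2 := by positivity
  refine ⟨?_, Or.inr ?_, 2 * R * c / (R ^ 2 + I ^ 2) ^ 2, by positivity, by rw [hzim, hI]; ring⟩
  · rw [hzre, le_div_iff₀ hN]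
    have hτ₂ : τ ^ 2 < 1 / 4 := by nlinarith
    have hI₄ : I ^ 2 ≤ R ^ 2 / 4 := by nlinarith [mul_le_mul_of_nonneg_right hτ₂.le (sq_nonneg R)]
    have hR₂ : R ^ 2 ≤ 9 / 4 := by nlinarith
    have hN₁ : (R ^ 2 + I ^ 2) ^ 2 ≤ (5 / 4 * R ^ 2) ^ 2 :=
      pow_le_pow_left₀ (by positivity) (by linarith) 2
    nlinarith [mul_le_mul_of_nonneg_right hR₂ (sq_nonneg R)]
  · rw [hzre, hzim, neg_div, abs_neg, abs_div, abs_of_pos hN, div_lt_div_iff_of_pos_right hN,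
      abs_mul, abs_of_pos (by linarith : 0 < 2 * R)]
    nlinarith [abs_nonneg I, sq_abs I]

lemma IsIdempotentElem.smul_one_sub_add_smul_mul {K A : Type*} [CommRing K] [Ring A]
    [Algebra K A] {Q : A} (hQ : IsIdempotentElem Q) (a b c d : K) :
    (a • (1 - Q) + b • Q) * (c • (1 - Q) + d • Q) = (a * c) • (1 - Q) + (b * d) • Q := by
  simp only [add_mul, mul_add, smul_mul_smul_comm, hQ.eq, hQ.one_sub.eq, hQ.mul_one_sub_self,
    hQ.one_sub_mul_self, smul_zero, add_zero, zero_add]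

namespace Matrix

lemma transpose_mul_self_mulVec_dotProduct {ι K : Type*} [Fintype ι] [DecidableEq ι]
    [CommRing K] {Q : Matrix ι ι K} (hQ : IsIdempotentElem Q) (hQt : Qᵀ = Q) (a b : K) (y : ι → K) :
    ((a • (1 - Q) + b • Q)ᵀ * (a • (1 - Q) + b • Q)) *ᵥ y ⬝ᵥ y
      = a ^ 2 * (y ⬝ᵥ y - Q *ᵥ y ⬝ᵥ y) + b ^ 2 * (Q *ᵥ y ⬝ᵥ y) := by
  rw [transpose_add, transpose_smul, transpose_smul, transpose_sub, transpose_one, hQt,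
    hQ.smul_one_sub_add_smul_mul]
  simp only [add_mulVec, smul_mulVec, sub_mulVec, one_mulVec, add_dotProduct, smul_dotProduct,
    sub_dotProduct, smul_eq_mul]
  ring

variable {ι K : Type*} [Fintype ι] [Field K]

lemma inv_smul_one_sub_add_smul [DecidableEq ι] {Q : Matrix ι ι K} (hQ : IsIdempotentElem Q)
    {a b : K} (ha : a ≠ 0) (hb : b ≠ 0) : (a • (1 - Q) + b • Q)⁻¹ = a⁻¹ • (1 - Q) + b⁻¹ • Q := by
  apply inv_eq_right_inv
  rw [hQ.smul_one_sub_add_smul_mul, mul_inv_cancel₀ ha, mul_inv_cancel₀ hb, one_smul, one_smul,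
    sub_add_cancel]

def lineProj (x : ι → K) : Matrix ι ι K := (x ⬝ᵥ x)⁻¹ • vecMulVec x x

variable {x : ι → K}

lemma isIdempotentElem_lineProj (hx : x ⬝ᵥ x ≠ 0) : IsIdempotentElem (lineProj x) := by
  rw [IsIdempotentElem, lineProj, smul_mul_smul_comm, vecMulVec_mul_vecMulVec, vecMulVec_smul,
    smul_smul, mul_assoc, inv_mul_cancel₀ hx, mul_one]

lemma transpose_lineProj : (lineProj x)ᵀ = lineProj x := by
  simp [lineProj]

lemma lineProj_mulVec_dotProduct (y : ι → K) :
    lineProj x *ᵥ y ⬝ᵥ y = (x ⬝ᵥ y) ^ 2 / (x ⬝ᵥ x) := by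
  rw [lineProj, smul_mulVec, vecMulVec_mulVec, op_smul_eq_smul, smul_dotProduct, smul_dotProduct,
    smul_eq_mul, smul_eq_mul, dotProduct_comm x y]
  ring

end Matrix

lemma ofReal_dotProduct_ofReal {n : ℕ} (ξ η : Rn n) :
    (fun j => (ξ j : ℂ)) ⬝ᵥ (fun j => (η j : ℂ)) = (inner ℝ ξ η : ℂ) := by
  simp [dotProduct, PiLp.inner_apply, mul_comm]

lemma ofReal_dotProduct_self {n : ℕ} (ξ : Rn n) :
    (fun j => (ξ j : ℂ)) ⬝ᵥ (fun j => (ξ j : ℂ)) = ((‖ξ‖ ^ 2 : ℝ) : ℂ) := by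
  rw [ofReal_dotProduct_ofReal, real_inner_self_eq_norm_sq]

lemma DphiMat_eq {n : ℕ} (ρ : ℝ → ℝ) (θ : ℂ) {ξ : Rn n} (hξ : ξ ≠ 0) :
    DphiMat ρ θ ξ
      = (1 + θ * ((ρ ‖ξ‖ / ‖ξ‖ : ℝ) : ℂ)) • (1 - lineProj fun j => (ξ j : ℂ))
        + (1 + θ * ((deriv ρ ‖ξ‖ : ℝ) : ℂ)) • lineProj fun j => (ξ j : ℂ) := by
  have hr : (‖ξ‖ : ℂ) ≠ 0 := by simpa using hξ
  rw [lineProj, ofReal_dotProduct_self]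
  ext i j
  by_cases hij : i = j <;>
  · simp [DphiMat, DpsiMat, hξ, one_apply, vecMulVec_apply, hij]
    field_simp
    ring

lemma qForm_eq {n : ℕ} (ρ : ℝ → ℝ) (θ : ℂ) {ξ : Rn n} (hξ : ξ ≠ 0) (ξs : Rn n)
    (hα : 1 + θ * ((ρ ‖ξ‖ / ‖ξ‖ : ℝ) : ℂ) ≠ 0) (hμ : 1 + θ * ((deriv ρ ‖ξ‖ : ℝ) : ℂ) ≠ 0) :
    qForm ρ θ ξ ξs
      = ((‖ξs‖ ^ 2 - inner ℝ ξ ξs ^ 2 / ‖ξ‖ ^ 2 : ℝ) : ℂ)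
          * ((1 + θ * ((ρ ‖ξ‖ / ‖ξ‖ : ℝ) : ℂ)) ^ 2)⁻¹
        + ((inner ℝ ξ ξs ^ 2 / ‖ξ‖ ^ 2 : ℝ) : ℂ) * ((1 + θ * ((deriv ρ ‖ξ‖ : ℝ) : ℂ)) ^ 2)⁻¹ := by
  have hx : (fun j => (ξ j : ℂ)) ⬝ᵥ (fun j => (ξ j : ℂ)) ≠ 0 := by
    rw [ofReal_dotProduct_self]; simpa using hξ
  have hQ := isIdempotentElem_lineProj hx
  rw [qForm, DphiMat_eq ρ θ hξ, inv_smul_one_sub_add_smul hQ hα hμ]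
  change (_ *ᵥ _) ⬝ᵥ _ = _
  rw [transpose_mul_self_mulVec_dotProduct hQ transpose_lineProj, lineProj_mulVec_dotProduct]
  simp only [ofReal_dotProduct_ofReal, real_inner_self_eq_norm_sq, ← inv_pow]
  push_cast
  ring

lemma qForm_re_ge_and_mem_quarterSector {n : ℕ} {ρ : ℝ → ℝ} (hρ : Differentiable ℝ ρ)
    (hρ0 : ρ 0 = 0) {c : ℝ} (hρ' : ∀ t ≥ 0, deriv ρ t ∈ Set.Icc 0 c) {θ : ℂ}
    (hθ : c * (|θ.re| + |θ.im|) < Real.tan (π / 8)) {ξ : Rn n} (hξ : ξ ≠ 0) (ξs : Rn n) :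
    1 / 16 * ‖ξs‖ ^ 2 ≤ (qForm ρ θ ξ ξs).re ∧ qForm ρ θ ξ ξs ∈ quarterSector θ := by
  have hr : 0 < ‖ξ‖ := norm_pos_iff.2 hξ
  have hθ' {a : ℝ} (ha : a ∈ Set.Icc 0 c) : a * (|θ.re| + |θ.im|) < Real.tan (π / 8) :=
    (mul_le_mul_of_nonneg_right ha.2 (by positivity)).trans_lt hθ
  have hα := div_self_mem_of_deriv_mem hρ hρ0 hρ' hr
  have hμ := hρ' ‖ξ‖ hr.le
  obtain ⟨hz₁re, hz₁⟩ := inv_sq_one_add_mul_ofReal_re_ge_and_mem_quarterSector hα.1 (hθ' hα)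
  obtain ⟨hz₂re, hz₂⟩ := inv_sq_one_add_mul_ofReal_re_ge_and_mem_quarterSector hμ.1 (hθ' hμ)
  have hne {w : ℂ} (hw : 1 / 16 ≤ ((w ^ 2)⁻¹).re) : w ≠ 0 := by
    rintro rfl
    norm_num at hw
  have hCS : inner ℝ ξ ξs ^ 2 / ‖ξ‖ ^ 2 ≤ ‖ξs‖ ^ 2 := by
    rw [div_le_iff₀ (by positivity), ← mul_pow, mul_comm, ← sq_abs]
    exact pow_le_pow_left₀ (abs_nonneg _) (abs_real_inner_le_norm ξ ξs) 2
  rw [qForm_eq ρ θ hξ ξs (hne hz₁re) (hne hz₂re)]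
  refine ⟨?_, quarterSector.add_mem (quarterSector.ofReal_mul_mem (by linarith) hz₁)
    (quarterSector.ofReal_mul_mem (by positivity) hz₂)⟩
  simp only [Complex.add_re, Complex.re_ofReal_mul]
  nlinarith [mul_le_mul_of_nonneg_left hz₁re (sub_nonneg.2 hCS),
    mul_le_mul_of_nonneg_left hz₂re (by positivity : 0 ≤ inner ℝ ξ ξs ^ 2 / ‖ξ‖ ^ 2)]

theorem qForm_arg_and_lower_bound_general
    (n : ℕ) (γ : ℝ)
    (ρ : ℝ → ℝ) (hρ : ContDiff ℝ (⊤ : ℕ∞) ρ)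
    (hρ0 : ∃ t₀ > 0, ∀ t ≤ t₀, ρ t = 0)
    (hρ' : ∀ t ≥ (0:ℝ), 0 ≤ deriv ρ t ∧ deriv ρ t < γ⁻¹ * Real.tan (π/8)) :
    (∀ θ ∈ Dgamma γ, ∀ ξ : Rn n, ξ ≠ 0 → ∀ ξs : Rn n,
        (0 ≤ θ.im →
          0 ≤ -(qForm ρ θ ξ ξs).arg ∧ -(qForm ρ θ ξ ξs).arg < π/4) ∧
        (θ.im ≤ 0 →
          0 ≤ (qForm ρ θ ξ ξs).arg ∧ (qForm ρ θ ξ ξs).arg < π/4))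
      ∧ ∃ C > 0, ∀ θ ∈ Dgamma γ, ∀ ξ : Rn n, ξ ≠ 0 → ∀ ξs : Rn n,
          C * ‖ξs‖ ^ 2 ≤ ‖qForm ρ θ ξ ξs‖ := by
  obtain ⟨t₀, ht₀, hρt₀⟩ := hρ0
  have hsmall {θ : ℂ} (hθ : θ ∈ Dgamma γ) :
      γ⁻¹ * Real.tan (π / 8) * (|θ.re| + |θ.im|) < Real.tan (π / 8) := by
    have hγ : 0 < γ := (by positivity : 0 ≤ |θ.re| + |θ.im|).trans_lt hθ
    rw [mul_comm γ⁻¹, mul_assoc]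
    exact mul_lt_of_lt_one_right tan_pi_div_eight_pos ((inv_mul_lt_one₀ hγ).2 hθ)
  have hq {θ : ℂ} (hθ : θ ∈ Dgamma γ) {ξ : Rn n} (hξ : ξ ≠ 0) (ξs : Rn n) :=
    qForm_re_ge_and_mem_quarterSector (hρ.differentiable (by simp)) (hρt₀ 0 ht₀.le)
      (fun t ht => ⟨(hρ' t ht).1, (hρ' t ht).2.le⟩) (hsmall hθ) hξ ξs
  exact ⟨fun θ hθ ξ hξ ξs => quarterSector.arg_bounds (hq hθ hξ ξs).2,
    1 / 16, by norm_num, fun θ hθ ξ hξ ξs => (hq hθ hξ ξs).1.trans (Complex.re_le_norm _)⟩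

/-- equations (3.17)–(3.19) of the paper.  For the quadratic form
`q = (Dφ_θ(ξ)⁻² ξ*)·ξ*` with `Dφ_θ⁻² = (Dφ_θ⁻¹)ᵀ Dφ_θ⁻¹`:
(i) if `±Im θ ≥ 0` then `0 ≤ ∓arg q < π/4`;
(ii) there is `C > 0`, depending only on `γ` and the bounds on `ρ'`, with
`|q| ≥ C|ξ*|²`. -/
theorem qForm_arg_and_lower_bound
    (n : ℕ) (γ : ℝ) (hγ : 0 < γ)
    (ρ : ℝ → ℝ) (hρ : ContDiff ℝ (⊤ : ℕ∞) ρ)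
    (hρ0 : ∃ t₀ > 0, ∀ t ≤ t₀, ρ t = 0)
    (hρ1 : ∃ t₁ : ℝ, ∀ t ≥ t₁, ρ t = 1)
    (hρ' : ∀ t ≥ (0:ℝ), 0 ≤ deriv ρ t ∧ deriv ρ t < γ⁻¹ * Real.tan (π/8)) :
    (∀ θ ∈ Dgamma γ, ∀ ξ : Rn n, ξ ≠ 0 → ∀ ξs : Rn n,
        (0 ≤ θ.im →
          0 ≤ -(qForm ρ θ ξ ξs).arg ∧ -(qForm ρ θ ξ ξs).arg < π/4) ∧
        (θ.im ≤ 0 →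
          0 ≤ (qForm ρ θ ξ ξs).arg ∧ (qForm ρ θ ξ ξs).arg < π/4))
      ∧ ∃ C > 0, ∀ θ ∈ Dgamma γ, ∀ ξ : Rn n, ξ ≠ 0 → ∀ ξs : Rn n,
          C * ‖ξs‖ ^ 2 ≤ ‖qForm ρ θ ξ ξs‖ :=
  qForm_arg_and_lower_bound_general n γ ρ hρ hρ0 hρ'
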